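/- Let D be a triangulated category with shift functor Σ, let (U₁,V₁) and (U₂,V₂) be t-structures on D with U₁ ⊆ U₂, and set H = U₂ ∩ V₁. Then the maps Φ(T,F) = (T ∩ V₁, U₂ ∩ F) and Ψ(X,Y) = (U₁∗X, Y∗V₂) are mutually inverse, order-preserving bijections between the set of t-structures (T,F) on D with U₁ ⊆ T ⊆ U₂ (ordered by inclusion of the first components) and the set of s-torsion pairs in H (ordered by inclusion of the first components). Here U₁∗X is the class of objects M admitting a distinguished triangle U → M → X → ΣU with U ∈ U₁ and X ∈ X, and Y∗V₂ is the class of objects M admitting a distinguished triangle Y → M → V → ΣY with Y ∈ Y and V ∈ V₂. -/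

import Mathlib

open CategoryTheory Limits Pretriangulated

universe v u

variable (D : Type u) [Category.{v} D] [HasZeroObject D] [HasShift D ℤ]
  [Preadditive D] [∀ n : ℤ, (shiftFunctor D n).Additive] [Pretriangulated D]

/-- A class of objects closed under isomorphisms. -/
def IsoClosed (S : Set D) : Prop := ∀ ⦃X Y : D⦄, (X ≅ Y) → X ∈ S → Y ∈ S

/-- (STP1): every object sits in a distinguished triangle with first term in `T`
and third term in `F`. -/
def STP1 (T F : Set D) : Prop :=
  ∀ X : D, ∃ (A B : D) (f : A ⟶ X) (g : X ⟶ B) (h : B ⟶ A⟦(1 : ℤ)⟧),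
    Triangle.mk f g h ∈ (distTriang D) ∧ A ∈ T ∧ B ∈ F

/-- (STP2): `Hom(T, F) = 0`. -/
def STP2 (T F : Set D) : Prop :=
  ∀ A ∈ T, ∀ B ∈ F, ∀ f : A ⟶ B, f = 0

/-- (STP3): `Hom(T, Σ⁻¹ F) = 0`. -/
def STP3 (T F : Set D) : Prop :=
  ∀ A ∈ T, ∀ B ∈ F, ∀ f : A ⟶ B⟦(-1 : ℤ)⟧, f = 0

/-- An `s`-torsion pair in a triangulated category: a pair of iso-closed classes
satisfying (STP1), (STP2) and (STP3). -/
def IsSTorsionPair (T F : Set D) : Prop :=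
  IsoClosed D T ∧ IsoClosed D F ∧ STP1 D T F ∧ STP2 D T F ∧ STP3 D T F

/-- `star X Y` is the class of objects `M` admitting a distinguished triangle
`A → M → B → ΣA` with `A ∈ X` and `B ∈ Y`. -/
def star (X Y : Set D) : Set D :=
  {M : D | ∃ (A B : D) (f : A ⟶ M) (g : M ⟶ B) (h : B ⟶ A⟦(1 : ℤ)⟧),
    Triangle.mk f g h ∈ (distTriang D) ∧ A ∈ X ∧ B ∈ Y}

/-- A `t`-structure on `D`: a pair of iso-closed classes satisfying (STP1), (STP2), and
closedness of the first class under positive shift. -/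
def IsTStructure (U V : Set D) : Prop :=
  IsoClosed D U ∧ IsoClosed D V ∧ STP1 D U V ∧ STP2 D U V ∧
    ∀ X ∈ U, X⟦(1 : ℤ)⟧ ∈ U

/-- An `s`-torsion pair in a class `H` of objects of `D`: a pair of iso-closed subclasses
`(X, Y)` of `H` such that every object of `H` sits in a distinguished triangle with ends in
`X` and `Y`, with `Hom(X, Y) = 0` and `Hom(X, Σ⁻¹Y) = 0`. -/
def IsSTorsionPairIn (H X Y : Set D) : Prop :=
  X ⊆ H ∧ Y ⊆ H ∧ IsoClosed D X ∧ IsoClosed D Y ∧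
  (∀ H₀ ∈ H, ∃ (A B : D) (f : A ⟶ H₀) (g : H₀ ⟶ B) (δ : B ⟶ A⟦(1 : ℤ)⟧),
    Triangle.mk f g δ ∈ (distTriang D) ∧ A ∈ X ∧ B ∈ Y) ∧
  STP2 D X Y ∧ STP3 D X Y

/-!
Each class of a t-structure is the orthogonal of the other, and the same holds inside `H` for
an s-torsion pair, so every membership claim reduces to the vanishing of Hom groups, which
propagates along distinguished triangles through the long exact Hom sequences.

The heart of the proof is the truncation of an object `M` for `(U₁ ∗ X, Y ∗ V₂)`: truncate `M`
by `(U₂, V₂)` to get `A₂ → M → B₂`, truncate `A₂` by `(U₁, V₁)` to get `A₁ → A₂ → C` with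
`C ∈ H`, split `C` as `x → C → y`, and let `T` be the fibre of `A₂ → y` and `F` the cone of
`T → M`. The octahedral axiom would exhibit `T` as an extension of `A₁` and `x`, and `F` as an
extension of `y` and `B₂`; since `D` is only pretriangulated, diagram chases show instead that
`T` and `F` satisfy the orthogonality conditions characterising `U₁ ∗ X` and `Y ∗ V₂`.
-/

open ZeroObject

variable {D}

omit [HasZeroObject D] [Pretriangulated D] in
lemma shift_one_hom_eq_zero_iff {A B : D} :
    (∀ g : A⟦(1 : ℤ)⟧ ⟶ B, g = 0) ↔ ∀ f : A ⟶ B⟦(-1 : ℤ)⟧, f = 0 := by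
  constructor
  · intro h f
    apply (shiftFunctor D (1 : ℤ)).map_injective
    rw [Functor.map_zero, ← cancel_mono (shiftNegShift B (1 : ℤ)).hom, h (_ ≫ _), zero_comp]
  · intro h g
    apply (shiftFunctor D (-1 : ℤ)).map_injective
    rw [Functor.map_zero, ← cancel_epi (shiftShiftNeg A (1 : ℤ)).inv, h (_ ≫ _), comp_zero]

section DistinguishedTriangle

variable (T : Triangle D) (hT : T ∈ distTriang D)
include hT

lemma triangle_yoneda_exact₁ {X : D} (f : T.obj₁ ⟶ X) (hf : T.mor₃ ≫ f⟦(1 : ℤ)⟧' = 0) :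
    ∃ g : T.obj₂ ⟶ X, f = T.mor₁ ≫ g := by
  obtain ⟨g', hg'⟩ := Triangle.yoneda_exact₂ _ (rot_of_distTriang _ (rot_of_distTriang _ hT)) _ hf
  obtain ⟨g, rfl⟩ : ∃ g : T.obj₂ ⟶ X, g⟦(1 : ℤ)⟧' = g' := Functor.map_surjective _ g'
  refine ⟨-g, (shiftFunctor D (1 : ℤ)).map_injective ?_⟩
  rw [(shiftFunctor D (1 : ℤ)).map_comp, Functor.map_neg, Preadditive.comp_neg]
  exact hg'.trans (Preadditive.neg_comp _ _)

variable {N : D}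

lemma hom_from_obj₂_eq_zero (h₁ : ∀ f : T.obj₁ ⟶ N, f = 0) (h₃ : ∀ f : T.obj₃ ⟶ N, f = 0)
    (f : T.obj₂ ⟶ N) : f = 0 := by
  obtain ⟨g, rfl⟩ := T.yoneda_exact₂ hT f (h₁ _)
  rw [h₃ g, comp_zero]

lemma hom_from_obj₃_eq_zero (h₂ : ∀ f : T.obj₂ ⟶ N, f = 0)
    (h₁ : ∀ f : T.obj₁⟦(1 : ℤ)⟧ ⟶ N, f = 0) (f : T.obj₃ ⟶ N) : f = 0 := by
  obtain ⟨g, rfl⟩ := T.yoneda_exact₃ hT f (h₂ _)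
  rw [h₁ g, comp_zero]

lemma hom_to_obj₂_eq_zero (h₁ : ∀ f : N ⟶ T.obj₁, f = 0) (h₃ : ∀ f : N ⟶ T.obj₃, f = 0)
    (f : N ⟶ T.obj₂) : f = 0 := by
  obtain ⟨g, rfl⟩ := T.coyoneda_exact₂ hT f (h₃ _)
  rw [h₁ g, zero_comp]

lemma hom_to_obj₁_eq_zero (h₂ : ∀ f : N ⟶ T.obj₂, f = 0)
    (h₃ : ∀ f : N⟦(1 : ℤ)⟧ ⟶ T.obj₃, f = 0) (f : N ⟶ T.obj₁) : f = 0 := by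
  obtain ⟨g, rfl⟩ := Triangle.coyoneda_exact₂ _ (inv_rot_of_distTriang T hT) f (h₂ _)
  rw [shift_one_hom_eq_zero_iff.1 h₃ g]
  exact zero_comp

lemma isIso_mor₁_of_mor₂_eq_zero (h₂ : T.mor₂ = 0) (h : ∀ g : T.obj₁⟦(1 : ℤ)⟧ ⟶ T.obj₃, g = 0) :
    IsIso T.mor₁ := by
  refine (T.isZero₃_iff_isIso₁ hT).1 ?_
  rw [IsZero.iff_id_eq_zero]
  obtain ⟨g, hg⟩ := T.yoneda_exact₃ hT (𝟙 _) (by rw [Category.comp_id, h₂])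
  rw [hg, h g, comp_zero]

lemma isIso_mor₂_of_mor₁_eq_zero (h₁ : T.mor₁ = 0) (h : ∀ g : T.obj₁⟦(1 : ℤ)⟧ ⟶ T.obj₃, g = 0) :
    IsIso T.mor₂ := by
  have hz : IsZero (T.obj₁⟦(1 : ℤ)⟧) := by
    rw [IsZero.iff_id_eq_zero]
    obtain ⟨g, hg⟩ := T.coyoneda_exact₁ hT (𝟙 _) (by rw [h₁, Functor.map_zero, comp_zero])
    rw [hg, h g, zero_comp]
  exact (T.isZero₁_iff_isIso₂ hT).1
    (((shiftFunctor D (-1 : ℤ)).map_isZero hz).of_iso (shiftShiftNeg _ (1 : ℤ)).symm)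

end DistinguishedTriangle

section Octahedral

variable {A₁ A₂ B C M T x y F N : D}

lemma hom_from_fiber_comp_eq_zero {f : A₁ ⟶ A₂} {g : A₂ ⟶ C} {δ : C ⟶ A₁⟦(1 : ℤ)⟧}
    (hfg : Triangle.mk f g δ ∈ distTriang D) {i : x ⟶ C} {p : C ⟶ y} {δ' : y ⟶ x⟦(1 : ℤ)⟧}
    (hip : Triangle.mk i p δ' ∈ distTriang D) {t : T ⟶ A₂} {ρ : y ⟶ T⟦(1 : ℤ)⟧}
    (ht : Triangle.mk t (g ≫ p) ρ ∈ distTriang D) (hA₁ : ∀ u : A₁ ⟶ N, u = 0)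
    (hx : ∀ u : x ⟶ N, u = 0) (φ : T ⟶ N) : φ = 0 := by
  have htgp : t ≫ g ≫ p = 0 := comp_distTriang_mor_zero₁₂ _ ht
  have hgpρ : (g ≫ p) ≫ ρ = 0 := comp_distTriang_mor_zero₂₃ _ ht
  obtain ⟨β, hβ⟩ : ∃ β : T ⟶ x, t ≫ g = β ≫ i :=
    Triangle.coyoneda_exact₂ _ hip (t ≫ g) ((Category.assoc _ _ _).trans htgp)
  have hρ : ρ ≫ φ⟦(1 : ℤ)⟧' = 0 := by
    have hg : g ≫ p ≫ ρ ≫ φ⟦(1 : ℤ)⟧' = 0 := by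
      simp only [← Category.assoc]
      rw [hgpρ, zero_comp]
    obtain ⟨u, hu⟩ : ∃ u : A₁⟦(1 : ℤ)⟧ ⟶ N⟦(1 : ℤ)⟧, p ≫ ρ ≫ φ⟦(1 : ℤ)⟧' = δ ≫ u :=
      Triangle.yoneda_exact₃ _ hfg _ hg
    obtain ⟨u, rfl⟩ : ∃ u₀ : A₁ ⟶ N, u₀⟦(1 : ℤ)⟧' = u := Functor.map_surjective _ u
    rw [hA₁ u, Functor.map_zero, comp_zero] at hu
    obtain ⟨r, hr⟩ : ∃ r : x⟦(1 : ℤ)⟧ ⟶ N⟦(1 : ℤ)⟧, ρ ≫ φ⟦(1 : ℤ)⟧' = δ' ≫ r :=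
      Triangle.yoneda_exact₃ _ hip _ hu
    obtain ⟨r, rfl⟩ : ∃ r₀ : x ⟶ N, r₀⟦(1 : ℤ)⟧' = r := Functor.map_surjective _ r
    rw [hr, hx r, Functor.map_zero, comp_zero]
  obtain ⟨χ, rfl⟩ : ∃ χ : A₂ ⟶ N, φ = t ≫ χ := triangle_yoneda_exact₁ _ ht φ hρ
  obtain ⟨χ', rfl⟩ : ∃ χ' : C ⟶ N, χ = g ≫ χ' := Triangle.yoneda_exact₂ _ hfg χ (hA₁ _)
  rw [← Category.assoc, hβ, Category.assoc, hx (i ≫ χ'), comp_zero]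

lemma hom_to_cone_comp_eq_zero {a : A₂ ⟶ M} {b : M ⟶ B} {e : B ⟶ A₂⟦(1 : ℤ)⟧}
    (hab : Triangle.mk a b e ∈ distTriang D) {t : T ⟶ A₂} {q : A₂ ⟶ y} {ρ : y ⟶ T⟦(1 : ℤ)⟧}
    (ht : Triangle.mk t q ρ ∈ distTriang D) {b' : M ⟶ F} {e' : F ⟶ T⟦(1 : ℤ)⟧}
    (hta : Triangle.mk (t ≫ a) b' e' ∈ distTriang D) (hB : ∀ u : N ⟶ B, u = 0)
    (hy : ∀ u : N ⟶ y, u = 0) (φ : N ⟶ F) : φ = 0 := by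
  have he't : e' ≫ (t ≫ a)⟦(1 : ℤ)⟧' = 0 := comp_distTriang_mor_zero₃₁ _ hta
  have htab : t ≫ a ≫ b' = 0 :=
    (Category.assoc _ _ _).symm.trans (comp_distTriang_mor_zero₁₂ _ hta)
  have hφe' : φ ≫ e' = 0 := by
    have h₁ : (φ ≫ e' ≫ t⟦(1 : ℤ)⟧') ≫ a⟦(1 : ℤ)⟧' = 0 := by
      rw [Category.assoc, Category.assoc, ← Functor.map_comp, he't, comp_zero]
    obtain ⟨κ, hκ⟩ : ∃ κ : N ⟶ B, φ ≫ e' ≫ t⟦(1 : ℤ)⟧' = κ ≫ e :=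
      Triangle.coyoneda_exact₁ _ hab _ h₁
    have h₂ : (φ ≫ e') ≫ t⟦(1 : ℤ)⟧' = 0 := by rw [Category.assoc, hκ, hB κ, zero_comp]
    obtain ⟨l, hl⟩ : ∃ l : N ⟶ y, φ ≫ e' = l ≫ ρ := Triangle.coyoneda_exact₁ _ ht _ h₂
    rw [hl, hy l, zero_comp]
  obtain ⟨μ, rfl⟩ : ∃ μ : N ⟶ M, φ = μ ≫ b' := Triangle.coyoneda_exact₃ _ hta φ hφe'
  obtain ⟨μ', rfl⟩ : ∃ μ' : N ⟶ A₂, μ = μ' ≫ a := Triangle.coyoneda_exact₂ _ hab μ (hB _)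
  obtain ⟨ν, hν⟩ : ∃ ν : y ⟶ F, a ≫ b' = q ≫ ν := Triangle.yoneda_exact₂ _ ht _ htab
  rw [Category.assoc, hν, ← Category.assoc, hy (μ' ≫ q), zero_comp]

end Octahedral

section Star

variable {X Y X' Y' : Set D}

lemma star_isoClosed : IsoClosed D (star D X Y) := by
  rintro M M' e ⟨A, B, f, g, δ, hT, hA, hB⟩
  refine ⟨A, B, f ≫ e.hom, e.inv ≫ g, δ, isomorphic_distinguished _ hT _ ?_, hA, hB⟩
  exact Triangle.isoMk _ _ (Iso.refl _) e.symm (Iso.refl _)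
    (by show (f ≫ e.hom) ≫ e.inv = 𝟙 A ≫ f; simp)
    (by show (e.inv ≫ g) ≫ 𝟙 B = e.inv ≫ g; simp)
    (by show δ ≫ (𝟙 A)⟦(1 : ℤ)⟧' = 𝟙 B ≫ δ; simp)

lemma star_mono (hX : X ⊆ X') (hY : Y ⊆ Y') : star D X Y ⊆ star D X' Y' :=
  fun _ ⟨A, B, f, g, δ, hT, hA, hB⟩ => ⟨A, B, f, g, δ, hT, hX hA, hY hB⟩

lemma subset_star_of_zero_mem_right (h0 : (0 : D) ∈ Y) : X ⊆ star D X Y :=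
  fun A hA => ⟨A, 0, 𝟙 A, 0, 0, contractible_distinguished A, hA, h0⟩

lemma subset_star_of_zero_mem_left (h0 : (0 : D) ∈ X) : Y ⊆ star D X Y :=
  fun B hB => ⟨0, B, 0, 𝟙 B, 0, contractible_distinguished₁ B, h0, hB⟩

lemma hom_from_mem_star_eq_zero {M N : D} (hM : M ∈ star D X Y)
    (hX : ∀ A ∈ X, ∀ f : A ⟶ N, f = 0) (hY : ∀ B ∈ Y, ∀ f : B ⟶ N, f = 0) (f : M ⟶ N) :
    f = 0 := by
  obtain ⟨A, B, f, g, δ, hT, hA, hB⟩ := hM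
  exact hom_from_obj₂_eq_zero _ hT (hX A hA) (hY B hB) _

lemma hom_to_mem_star_eq_zero {M N : D} (hN : N ∈ star D X Y)
    (hX : ∀ A ∈ X, ∀ f : M ⟶ A, f = 0) (hY : ∀ B ∈ Y, ∀ f : M ⟶ B, f = 0) (f : M ⟶ N) :
    f = 0 := by
  obtain ⟨A, B, f, g, δ, hT, hA, hB⟩ := hN
  exact hom_to_obj₂_eq_zero _ hT (hX A hA) (hY B hB) _

lemma mem_left_of_mem_star (hX : IsoClosed D X)
    (hXY : ∀ A ∈ X, ∀ B ∈ Y, ∀ g : A⟦(1 : ℤ)⟧ ⟶ B, g = 0) {M : D} (hM : M ∈ star D X Y)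
    (hMY : ∀ B ∈ Y, ∀ f : M ⟶ B, f = 0) : M ∈ X := by
  obtain ⟨A, B, f, g, δ, hT, hA, hB⟩ := hM
  have : IsIso f := isIso_mor₁_of_mor₂_eq_zero _ hT (hMY B hB g) (hXY A hA B hB)
  exact hX (asIso f) hA

lemma mem_right_of_mem_star (hY : IsoClosed D Y)
    (hXY : ∀ A ∈ X, ∀ B ∈ Y, ∀ g : A⟦(1 : ℤ)⟧ ⟶ B, g = 0) {M : D} (hM : M ∈ star D X Y)
    (hXM : ∀ A ∈ X, ∀ f : A ⟶ M, f = 0) : M ∈ Y := by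
  obtain ⟨A, B, f, g, δ, hT, hA, hB⟩ := hM
  have : IsIso g := isIso_mor₂_of_mor₁_eq_zero _ hT (hXM A hA f) (hXY A hA B hB)
  exact hY (asIso g).symm hB

end Star

namespace IsTStructure

variable {U V U' V' : Set D} (h : IsTStructure D U V)
include h

lemma isoClosed_left : IsoClosed D U := h.1

lemma isoClosed_right : IsoClosed D V := h.2.1

lemma mem_star (M : D) : M ∈ star D U V := h.2.2.1 M

lemma hom_eq_zero {A B : D} (hA : A ∈ U) (hB : B ∈ V) (f : A ⟶ B) : f = 0 :=
  h.2.2.2.1 A hA B hB f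

lemma shift_mem {A : D} (hA : A ∈ U) : A⟦(1 : ℤ)⟧ ∈ U := h.2.2.2.2 A hA

lemma shift_hom_eq_zero {A B : D} (hA : A ∈ U) (hB : B ∈ V) (f : A⟦(1 : ℤ)⟧ ⟶ B) : f = 0 :=
  h.hom_eq_zero (h.shift_mem hA) hB f

lemma mem_left_iff {M : D} : M ∈ U ↔ ∀ B ∈ V, ∀ f : M ⟶ B, f = 0 :=
  ⟨fun hM _ hB => h.hom_eq_zero hM hB, mem_left_of_mem_star h.isoClosed_left
    (fun _ hA _ hB => h.shift_hom_eq_zero hA hB) (h.mem_star M)⟩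

lemma mem_right_iff {M : D} : M ∈ V ↔ ∀ A ∈ U, ∀ f : A ⟶ M, f = 0 :=
  ⟨fun hM _ hA => h.hom_eq_zero hA hM, mem_right_of_mem_star h.isoClosed_right
    (fun _ hA _ hB => h.shift_hom_eq_zero hA hB) (h.mem_star M)⟩

lemma zero_mem_left : (0 : D) ∈ U :=
  h.mem_left_iff.2 fun _ _ f => (isZero_zero D).eq_of_src f 0

lemma zero_mem_right : (0 : D) ∈ V :=
  h.mem_right_iff.2 fun _ _ f => (isZero_zero D).eq_of_tgt f 0

lemma right_subset_of_subset (h' : IsTStructure D U' V') (hU : U ⊆ U') : V' ⊆ V :=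
  fun _ hB => h.mem_right_iff.2 fun _ hA => h'.hom_eq_zero (hU hA) hB

lemma star_left_subset : star D U U ⊆ U :=
  fun _ hM => h.mem_left_iff.2 fun _ hB =>
    hom_from_mem_star_eq_zero hM (fun _ hA => h.hom_eq_zero hA hB) (fun _ hA => h.hom_eq_zero hA hB)

lemma star_right_subset : star D V V ⊆ V :=
  fun _ hM => h.mem_right_iff.2 fun _ hA =>
    hom_to_mem_star_eq_zero hM (fun _ hB => h.hom_eq_zero hA hB) (fun _ hB => h.hom_eq_zero hA hB)

lemma obj₃_mem_left (T : Triangle D) (hT : T ∈ distTriang D) (h₁ : T.obj₁ ∈ U)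
    (h₂ : T.obj₂ ∈ U) : T.obj₃ ∈ U :=
  h.mem_left_iff.2 fun _ hB =>
    hom_from_obj₃_eq_zero T hT (h.hom_eq_zero h₂ hB) (h.shift_hom_eq_zero h₁ hB)

lemma obj₁_mem_right (T : Triangle D) (hT : T ∈ distTriang D) (h₂ : T.obj₂ ∈ V)
    (h₃ : T.obj₃ ∈ V) : T.obj₁ ∈ V :=
  h.mem_right_iff.2 fun _ hA =>
    hom_to_obj₁_eq_zero T hT (h.hom_eq_zero hA h₂) (h.shift_hom_eq_zero hA h₃)

end IsTStructure

namespace IsSTorsionPairIn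

variable {H X Y : Set D} (hs : IsSTorsionPairIn D H X Y)
include hs

lemma left_subset : X ⊆ H := hs.1

lemma right_subset : Y ⊆ H := hs.2.1

lemma isoClosed_left : IsoClosed D X := hs.2.2.1

lemma isoClosed_right : IsoClosed D Y := hs.2.2.2.1

lemma mem_star {M : D} (hM : M ∈ H) : M ∈ star D X Y := hs.2.2.2.2.1 M hM

lemma hom_eq_zero {A B : D} (hA : A ∈ X) (hB : B ∈ Y) (f : A ⟶ B) : f = 0 :=
  hs.2.2.2.2.2.1 A hA B hB f

lemma shift_hom_eq_zero {A B : D} (hA : A ∈ X) (hB : B ∈ Y) (f : A⟦(1 : ℤ)⟧ ⟶ B) : f = 0 :=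
  shift_one_hom_eq_zero_iff.2 (hs.2.2.2.2.2.2 A hA B hB) f

lemma mem_left_of_hom_eq_zero {M : D} (hM : M ∈ H) (hMY : ∀ B ∈ Y, ∀ f : M ⟶ B, f = 0) :
    M ∈ X :=
  mem_left_of_mem_star hs.isoClosed_left (fun _ hA _ hB => hs.shift_hom_eq_zero hA hB)
    (hs.mem_star hM) hMY

lemma mem_right_of_hom_eq_zero {M : D} (hM : M ∈ H) (hXM : ∀ A ∈ X, ∀ f : A ⟶ M, f = 0) :
    M ∈ Y :=
  mem_right_of_mem_star hs.isoClosed_right (fun _ hA _ hB => hs.shift_hom_eq_zero hA hB)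
    (hs.mem_star hM) hXM

lemma zero_mem_left (h0 : (0 : D) ∈ H) : (0 : D) ∈ X :=
  hs.mem_left_of_hom_eq_zero h0 fun _ _ f => (isZero_zero D).eq_of_src f 0

end IsSTorsionPairIn

namespace IsTStructure

variable {U V T F X Y : Set D}

lemma star_inter_eq_of_subset (h : IsTStructure D U V) (hTF : IsTStructure D T F)
    (hUT : U ⊆ T) : star D U (T ∩ V) = T := by
  refine ((star_mono hUT Set.inter_subset_left).trans hTF.star_left_subset).antisymm
    fun M hM => ?_
  obtain ⟨A, B, f, g, δ, hT, hA, hB⟩ := h.mem_star M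
  exact ⟨A, B, f, g, δ, hT, hA, hTF.obj₃_mem_left _ hT (hUT hA) hM, hB⟩

lemma star_inter_eq_of_subset' (h : IsTStructure D U V) (hTF : IsTStructure D T F)
    (hTU : T ⊆ U) : star D (U ∩ F) V = F := by
  have hVF : V ⊆ F := hTF.right_subset_of_subset h hTU
  refine ((star_mono Set.inter_subset_right hVF).trans hTF.star_right_subset).antisymm
    fun N hN => ?_
  obtain ⟨A, B, f, g, δ, hT, hA, hB⟩ := h.mem_star N
  exact ⟨A, B, f, g, δ, hT, ⟨hA, hTF.obj₁_mem_right _ hT hN (hVF hB)⟩, hB⟩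

lemma star_inter_eq (h : IsTStructure D U V) (hX : IsoClosed D X) (hXV : X ⊆ V) :
    star D U X ∩ V = X :=
  Set.Subset.antisymm
    (fun _ hM => mem_right_of_mem_star hX (fun _ hA _ hB => h.shift_hom_eq_zero hA (hXV hB))
      hM.1 fun _ hA => h.hom_eq_zero hA hM.2)
    fun _ hM => ⟨subset_star_of_zero_mem_left h.zero_mem_left hM, hXV hM⟩

lemma inter_star_eq (h : IsTStructure D U V) (hY : IsoClosed D Y) (hYU : Y ⊆ U) :
    U ∩ star D Y V = Y :=
  Set.Subset.antisymm
    (fun _ hM => mem_left_of_mem_star hY (fun _ hA _ hB => h.shift_hom_eq_zero (hYU hA) hB)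
      hM.2 fun _ hB => h.hom_eq_zero hM.1 hB)
    fun _ hM => ⟨hYU hM, subset_star_of_zero_mem_right h.zero_mem_right hM⟩

end IsTStructure

lemma isSTorsionPairIn_inter {U₁ V₁ U₂ V₂ T F : Set D} (h₁ : IsTStructure D U₁ V₁)
    (h₂ : IsTStructure D U₂ V₂) (hTF : IsTStructure D T F) (hUT : U₁ ⊆ T) (hTU : T ⊆ U₂) :
    IsSTorsionPairIn D (U₂ ∩ V₁) (T ∩ V₁) (U₂ ∩ F) := by
  have hFV : F ⊆ V₁ := h₁.right_subset_of_subset hTF hUT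
  refine ⟨Set.inter_subset_inter_left _ hTU, Set.inter_subset_inter_right _ hFV,
    fun _ _ e hM => ⟨hTF.isoClosed_left e hM.1, h₁.isoClosed_right e hM.2⟩,
    fun _ _ e hM => ⟨h₂.isoClosed_left e hM.1, hTF.isoClosed_right e hM.2⟩,
    fun M hM => ?_, fun _ hA _ hB => hTF.hom_eq_zero hA.1 hB.2,
    fun _ hA _ hB => shift_one_hom_eq_zero_iff.1 (hTF.shift_hom_eq_zero hA.1 hB.2)⟩
  obtain ⟨A, B, f, g, δ, hT, hA, hB⟩ := hTF.mem_star M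
  exact ⟨A, B, f, g, δ, hT, ⟨hA, h₁.obj₁_mem_right _ hT hM.2 (hFV hB)⟩,
    ⟨h₂.obj₃_mem_left _ hT (hTU hA) hM.1, hB⟩⟩

section Psi

variable {U₁ V₁ U₂ V₂ X Y : Set D} (h₁ : IsTStructure D U₁ V₁) (h₂ : IsTStructure D U₂ V₂)
  (h12 : U₁ ⊆ U₂) (hs : IsSTorsionPairIn D (U₂ ∩ V₁) X Y)
include h₁ h₂ h12 hs

lemma mem_star_left_of_hom_eq_zero {M : D} (hMY : ∀ y ∈ Y, ∀ f : M ⟶ y, f = 0)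
    (hMV : ∀ v ∈ V₂, ∀ f : M ⟶ v, f = 0) : M ∈ star D U₁ X := by
  obtain ⟨A, B, f, g, δ, hT, hA, hB⟩ := h₁.mem_star M
  have hBU₂ : B ∈ U₂ := h₂.obj₃_mem_left _ hT (h12 hA) (h₂.mem_left_iff.2 hMV)
  refine ⟨A, B, f, g, δ, hT, hA, hs.mem_left_of_hom_eq_zero ⟨hBU₂, hB⟩ fun y hy => ?_⟩
  exact hom_from_obj₃_eq_zero _ hT (hMY y hy) (h₁.shift_hom_eq_zero hA (hs.right_subset hy).2)

lemma mem_star_right_of_hom_eq_zero {N : D} (hUN : ∀ u ∈ U₁, ∀ f : u ⟶ N, f = 0)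
    (hXN : ∀ x ∈ X, ∀ f : x ⟶ N, f = 0) : N ∈ star D Y V₂ := by
  obtain ⟨A, B, f, g, δ, hT, hA, hB⟩ := h₂.mem_star N
  have hAV₁ : A ∈ V₁ := h₁.obj₁_mem_right _ hT (h₁.mem_right_iff.2 hUN)
    (h₁.right_subset_of_subset h₂ h12 hB)
  refine ⟨A, B, f, g, δ, hT, hs.mem_right_of_hom_eq_zero ⟨hA, hAV₁⟩ fun x hx => ?_, hB⟩
  exact hom_to_obj₁_eq_zero _ hT (hXN x hx) (h₂.shift_hom_eq_zero (hs.left_subset hx).1 hB)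

lemma hom_from_mem_star_left_eq_zero {M N : D} (hM : M ∈ star D U₁ X)
    (hN : N ∈ star D Y V₂) (f : M ⟶ N) : f = 0 :=
  hom_to_mem_star_eq_zero hN
    (fun _ hy => hom_from_mem_star_eq_zero hM
      (fun _ hA => h₁.hom_eq_zero hA (hs.right_subset hy).2) (fun _ hx => hs.hom_eq_zero hx hy))
    (fun _ hv => hom_from_mem_star_eq_zero hM
      (fun _ hA => h₂.hom_eq_zero (h12 hA) hv)
      (fun _ hx => h₂.hom_eq_zero (hs.left_subset hx).1 hv))
    f

lemma shift_mem_star_left {M : D} (hM : M ∈ star D U₁ X) : M⟦(1 : ℤ)⟧ ∈ star D U₁ X := by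
  obtain ⟨A, B, f, g, δ, hT, hA, hB⟩ := hM
  have hT' := rot_of_distTriang _ (rot_of_distTriang _ hT)
  refine mem_star_left_of_hom_eq_zero h₁ h₂ h12 hs (fun y hy => ?_) (fun v hv => ?_)
  · exact hom_from_obj₃_eq_zero _ hT'
      (h₁.hom_eq_zero (h₁.shift_mem hA) (hs.right_subset hy).2) (hs.shift_hom_eq_zero hB hy)
  · exact hom_from_obj₃_eq_zero _ hT'
      (h₂.hom_eq_zero (h₂.shift_mem (h12 hA)) hv) (h₂.shift_hom_eq_zero (hs.left_subset hB).1 hv)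

lemma mem_star_star (M : D) : M ∈ star D (star D U₁ X) (star D Y V₂) := by
  obtain ⟨A₂, B₂, a, b, e, hab, hA₂, hB₂⟩ := h₂.mem_star M
  obtain ⟨A₁, C, f, g, δ, hfg, hA₁, hC⟩ := h₁.mem_star A₂
  have hCU₂ : C ∈ U₂ := h₂.obj₃_mem_left _ hfg (h12 hA₁) hA₂
  obtain ⟨x, y, i, p, δ', hip, hx, hy⟩ := hs.mem_star ⟨hCU₂, hC⟩
  obtain ⟨T, t, ρ, ht⟩ := distinguished_cocone_triangle₁ (g ≫ p)
  obtain ⟨F, b', e', hta⟩ := distinguished_cocone_triangle (t ≫ a)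
  refine ⟨T, F, t ≫ a, b', e', hta, ?_, ?_⟩
  · refine mem_star_left_of_hom_eq_zero h₁ h₂ h12 hs (fun y' hy' => ?_) (fun v hv => ?_)
    · exact hom_from_fiber_comp_eq_zero hfg hip ht
        (h₁.hom_eq_zero hA₁ (hs.right_subset hy').2) (hs.hom_eq_zero hx hy')
    · exact hom_from_fiber_comp_eq_zero hfg hip ht
        (h₂.hom_eq_zero (h12 hA₁) hv) (h₂.hom_eq_zero (hs.left_subset hx).1 hv)
  · refine mem_star_right_of_hom_eq_zero h₁ h₂ h12 hs (fun u hu => ?_) (fun x' hx' => ?_)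
    · exact hom_to_cone_comp_eq_zero hab ht hta
        (h₂.hom_eq_zero (h12 hu) hB₂) (h₁.hom_eq_zero hu (hs.right_subset hy).2)
    · exact hom_to_cone_comp_eq_zero hab ht hta
        (h₂.hom_eq_zero (hs.left_subset hx').1 hB₂) (hs.hom_eq_zero hx' hy)

lemma isTStructure_star : IsTStructure D (star D U₁ X) (star D Y V₂) :=
  ⟨star_isoClosed, star_isoClosed, mem_star_star h₁ h₂ h12 hs,
    fun _ hM _ hN => hom_from_mem_star_left_eq_zero h₁ h₂ h12 hs hM hN,
    fun _ hM => shift_mem_star_left h₁ h₂ h12 hs hM⟩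

end Psi

/-- the bijection of HRS-tilt type.
Let `(U₁, V₁)` and `(U₂, V₂)` be `t`-structures on `D` with `U₁ ⊆ U₂` and `H = U₂ ∩ V₁`.
Then `Φ(T, F) = (T ∩ V₁, U₂ ∩ F)` and `Ψ(X, Y) = (U₁ ∗ X, Y ∗ V₂)` are mutually inverse,
order-preserving bijections between the `t`-structures `(T, F)` on `D` with `U₁ ⊆ T ⊆ U₂`
and the `s`-torsion pairs in `H`. -/
theorem stmt7 (U₁ V₁ U₂ V₂ : Set D)
    (h₁ : IsTStructure D U₁ V₁) (h₂ : IsTStructure D U₂ V₂) (h12 : U₁ ⊆ U₂) :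
    -- `Φ` is well defined
    (∀ T F : Set D, IsTStructure D T F → U₁ ⊆ T → T ⊆ U₂ →
      IsSTorsionPairIn D (U₂ ∩ V₁) (T ∩ V₁) (U₂ ∩ F)) ∧
    -- `Ψ` is well defined
    (∀ X Y : Set D, IsSTorsionPairIn D (U₂ ∩ V₁) X Y →
      IsTStructure D (star D U₁ X) (star D Y V₂) ∧
        U₁ ⊆ star D U₁ X ∧ star D U₁ X ⊆ U₂) ∧
    -- `Ψ ∘ Φ = id`
    (∀ T F : Set D, IsTStructure D T F → U₁ ⊆ T → T ⊆ U₂ →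
      star D U₁ (T ∩ V₁) = T ∧ star D (U₂ ∩ F) V₂ = F) ∧
    -- `Φ ∘ Ψ = id`
    (∀ X Y : Set D, IsSTorsionPairIn D (U₂ ∩ V₁) X Y →
      (star D U₁ X) ∩ V₁ = X ∧ U₂ ∩ (star D Y V₂) = Y) ∧
    -- `Φ` is order-preserving
    (∀ T T' : Set D, T ⊆ T' → T ∩ V₁ ⊆ T' ∩ V₁) ∧
    -- `Ψ` is order-preserving
    (∀ X X' : Set D, X ⊆ X' → star D U₁ X ⊆ star D U₁ X') := by
  have h0H : (0 : D) ∈ U₂ ∩ V₁ := ⟨h₂.zero_mem_left, h₁.zero_mem_right⟩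
  refine ⟨fun T F hTF hUT hTU => isSTorsionPairIn_inter h₁ h₂ hTF hUT hTU,
    fun X Y hs => ⟨isTStructure_star h₁ h₂ h12 hs,
      subset_star_of_zero_mem_right (hs.zero_mem_left h0H),
      (star_mono h12 (hs.left_subset.trans Set.inter_subset_left)).trans h₂.star_left_subset⟩,
    fun T F hTF hUT hTU => ⟨h₁.star_inter_eq_of_subset hTF hUT,
      h₂.star_inter_eq_of_subset' hTF hTU⟩,
    fun X Y hs =>
      ⟨h₁.star_inter_eq hs.isoClosed_left (hs.left_subset.trans Set.inter_subset_right),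
        h₂.inter_star_eq hs.isoClosed_right (hs.right_subset.trans Set.inter_subset_left)⟩,
    fun T T' hT => Set.inter_subset_inter_left _ hT,
    fun X X' hX => star_mono subset_rfl hX⟩
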